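/- Let A = {a,b,c} be a three-letter alphabet and m ≥ 2. The two-sided infinite word of period 3(m-1) given by repeating a^{m-1} c^{m-1} b^{m-1} avoids the set {a⋄^{m-2}a, b⋄^{m-2}b, c⋄^{m-2}c, a⋄^{m-2}b, c⋄^{m-2}a, b⋄^{m-2}c}, where ⋄ denotes a hole. Hence this set is avoidable. -/

import Mathlib

/-! Shifting the word by `m - 1` positions moves every letter one step along the cycle
`a → c → b → a`, so an occurrence of `x ⋄^(m-2) y` forces `y` to be the successor of `x`;
none of the six partial words has this shape. -/

/-- The three-letter alphabet. -/
inductive ABC | a | b | c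
deriving DecidableEq
open ABC

/-- A partial word of length `m` over alphabet `A`. -/
abbrev PW (m : ℕ) (A : Type) := Fin m → Option A

/-- A two-sided infinite word `w` meets a partial word `u`. -/
def Meets {m : ℕ} {A : Type} (w : ℤ → A) (u : PW m A) : Prop :=
  ∃ i : ℤ, ∀ j : Fin m, ∀ x : A, u j = some x → w (i + (j : ℕ)) = x

/-- A set of partial words is unavoidable over `A`. -/
def Unavoidable {m : ℕ} {A : Type} (X : Set (PW m A)) : Prop :=
  ∀ w : ℤ → A, ∃ u ∈ X, Meets w u

/-- A set of partial words is avoidable over `A`. -/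
def Avoidable {m : ℕ} {A : Type} (X : Set (PW m A)) : Prop :=
  ∃ w : ℤ → A, ∀ u ∈ X, ¬ Meets w u

/-- The partial word `x ⋄^(m-2) y` of length `m`: first letter `x`, last letter `y`,
holes in between. -/
def oneHole {A : Type} (m : ℕ) (x y : A) : PW m A :=
  fun j => if (j : ℕ) = 0 then some x else if (j : ℕ) = m - 1 then some y else none

/-- The partial word `x ⋄^(p-1) d ⋄^(m-p-2) y` of length `m`: first letter `x`,
letter `d` at position `p`, last letter `y`, holes elsewhere. -/
def twoDef {A : Type} (m : ℕ) (x d y : A) (p : ℕ) : PW m A :=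
  fun j => if (j : ℕ) = 0 then some x else if (j : ℕ) = p then some d
    else if (j : ℕ) = m - 1 then some y else none

/-- The two-sided infinite word of period `P` repeating the block `f` (given on `[0, P)`). -/
def periodic {A : Type} (P : ℕ) (f : ℕ → A) : ℤ → A :=
  fun i => f ((i % (P : ℤ)).toNat)

theorem periodic_add {A : Type} {P : ℕ} (hP : 0 < P) (f : ℕ → A) (i : ℤ) (k : ℕ) :
    periodic P f (i + k) = periodic P (fun n => f ((n + k) % P)) i := by
  have hnn : 0 ≤ i % P := Int.emod_nonneg i (by omega)
  unfold periodic
  congr 1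
  apply Int.ofNat_inj.mp
  rw [Int.toNat_of_nonneg (Int.emod_nonneg _ (by omega)), Int.natCast_emod, Nat.cast_add,
    Int.toNat_of_nonneg hnn, Int.emod_add_emod]

def ABC.next : ABC → ABC
  | a => c
  | c => b
  | b => a

def acbBlock (k n : ℕ) : ABC :=
  if n < k then a else if n < 2 * k then c else b

theorem acbBlock_add_mod {k r : ℕ} (hr : r < 3 * k) :
    acbBlock k ((r + k) % (3 * k)) = (acbBlock k r).next := by
  unfold acbBlock
  by_cases h : r < 2 * k
  · rw [Nat.mod_eq_of_lt (by omega)]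
    split_ifs <;> first | rfl | omega
  · rw [Nat.mod_eq_sub_mod (by omega), Nat.mod_eq_of_lt (by omega)]
    split_ifs <;> first | rfl | omega

theorem periodic_acbBlock_add {k : ℕ} (hk : 0 < k) (i : ℤ) :
    periodic (3 * k) (acbBlock k) (i + k) = (periodic (3 * k) (acbBlock k) i).next := by
  rw [periodic_add (by omega)]
  exact acbBlock_add_mod (by have := Int.emod_lt_of_pos i (b := (3 * k : ℕ)) (by omega); omega)

theorem meets_oneHole_iff {A : Type} {m : ℕ} (hm : 2 ≤ m) (w : ℤ → A) (x y : A) :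
    Meets w (oneHole m x y) ↔ ∃ i : ℤ, w i = x ∧ w (i + (m - 1 : ℕ)) = y := by
  constructor
  · rintro ⟨i, h⟩
    refine ⟨i, by simpa using h ⟨0, by omega⟩ x (by simp [oneHole]), h ⟨m - 1, by omega⟩ y ?_⟩
    simp [oneHole, show m - 1 ≠ 0 by omega]
  · rintro ⟨i, hx, hy⟩
    refine ⟨i, fun j z hj => ?_⟩
    unfold oneHole at hj
    split_ifs at hj with h0 h1
    · simpa [h0, ← Option.some_inj.mp hj] using hx
    · rwa [h1, ← Option.some_inj.mp hj]

theorem not_meets_oneHole_of_shift {A : Type} {m : ℕ} (hm : 2 ≤ m) {w : ℤ → A} {σ : A → A}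
    (hw : ∀ i, w (i + (m - 1 : ℕ)) = σ (w i)) {x y : A} (hxy : σ x ≠ y) :
    ¬ Meets w (oneHole m x y) := by
  rw [meets_oneHole_iff hm]
  rintro ⟨i, hx, hy⟩
  exact hxy (by rw [← hx, ← hw, hy])

/-- The periodic word repeating a^(m-1) c^(m-1) b^(m-1) avoids
{a⋄^(m-2)a, b⋄^(m-2)b, c⋄^(m-2)c, a⋄^(m-2)b, c⋄^(m-2)a, b⋄^(m-2)c};
hence this set is avoidable. -/
theorem stmt_1 (m : ℕ) (hm : 2 ≤ m) :
    (∀ u ∈ ({oneHole m a a, oneHole m b b, oneHole m c c,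
              oneHole m a b, oneHole m c a, oneHole m b c} : Set (PW m ABC)),
      ¬ Meets (periodic (3 * (m - 1))
        (fun n => if n < m - 1 then a else if n < 2 * (m - 1) then c else b)) u) ∧
    Avoidable ({oneHole m a a, oneHole m b b, oneHole m c c,
                oneHole m a b, oneHole m c a, oneHole m b c} : Set (PW m ABC)) := by
  have avoids : ∀ u ∈ ({oneHole m a a, oneHole m b b, oneHole m c c,
      oneHole m a b, oneHole m c a, oneHole m b c} : Set (PW m ABC)),
      ¬ Meets (periodic (3 * (m - 1)) (acbBlock (m - 1))) u := by
    have shift := periodic_acbBlock_add (k := m - 1) (by omega)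
    rintro u (rfl | rfl | rfl | rfl | rfl | rfl) <;>
      exact not_meets_oneHole_of_shift hm shift (by decide)
  exact ⟨avoids, _, avoids⟩
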